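/- Let n ≥ 1, let f_1, ..., f_n : ℝ^d → ℝ each be differentiable with L-Lipschitz gradient (L ≥ 0), and let f = (1/n)∑_{i=1}^n f_i. Fix x, x̃ ∈ ℝ^d, step size η > 0, parameter β > 0, and constant c ≥ 0, and let v_i = ∇f_i(x) − ∇f_i(x̃) + ∇f(x̃) for i = 1,...,n. Set c' = c(1 + ηβ + 2η²L²) + η²L³. Then (1/n) ∑_{i=1}^n [ f(x − η v_i) + c‖(x − η v_i) − x̃‖² ] ≤ f(x) + c'‖x − x̃‖² − (η − cη/β − η²L − 2cη²)·‖∇f(x)‖². -/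

import Mathlib

/-! By the descent lemma for the `L`-smooth `f` and expansion of the square, each step satisfies
`A(x - ηv) ≤ A(x) - η⟪∇f x, v⟫ - 2cη⟪x - x̃, v⟫ + (Lη²/2 + cη²)‖v‖²`. The SVRG directions average
to `∇f x`, so averaging leaves `-η‖∇f x‖² - 2cη⟪x - x̃, ∇f x⟫` as linear terms; the cross term is
absorbed by Young's inequality with weight `β`, and the second moment of the directions is at most
`2‖∇f x‖² + 2L²‖x - x̃‖²` because a variance is bounded by the corresponding second moment. -/

open scoped RealInnerProductSpace

section Smooth

variable {E : Type*} [NormedAddCommGroup E] [InnerProductSpace ℝ E] [CompleteSpace E]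
  {φ : E → ℝ} {L : ℝ}

theorem le_add_inner_gradient_add_of_lipschitz_gradient (hφ : Differentiable ℝ φ)
    (hlip : ∀ a b, ‖gradient φ a - gradient φ b‖ ≤ L * ‖a - b‖) (x y : E) :
    φ y ≤ φ x + ⟪gradient φ x, y - x⟫ + L / 2 * ‖y - x‖ ^ 2 := by
  set p : ℝ → E := fun t => x + t • (y - x)
  set g : ℝ → ℝ := fun t =>
    φ (p t) - t * ⟪gradient φ x, y - x⟫ - t ^ 2 * (L / 2 * ‖y - x‖ ^ 2)
  have hp : ∀ t, HasDerivAt p (y - x) t := fun t => by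
    simpa [p] using ((hasDerivAt_id t).smul_const (y - x)).const_add x
  have hg : ∀ t, HasDerivAt g
      (⟪gradient φ (p t) - gradient φ x, y - x⟫ - t * (L * ‖y - x‖ ^ 2)) t := fun t => by
    have hφp : HasDerivAt (φ ∘ p) ⟪gradient φ (p t), y - x⟫ t := by
      simpa [HasGradientAt, Function.comp_def] using
        (hφ (p t)).hasGradientAt.hasFDerivAt.comp_hasDerivAt t (hp t)
    refine ((hφp.sub ((hasDerivAt_id' t).mul_const ⟪gradient φ x, y - x⟫)).sub
      ((hasDerivAt_pow 2 t).mul_const (L / 2 * ‖y - x‖ ^ 2))).congr_deriv ?_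
    rw [inner_sub_left]
    ring
  have hslope : ∀ t, 0 ≤ t →
      ⟪gradient φ (p t) - gradient φ x, y - x⟫ ≤ t * (L * ‖y - x‖ ^ 2) := fun t ht =>
    calc ⟪gradient φ (p t) - gradient φ x, y - x⟫
        ≤ ‖gradient φ (p t) - gradient φ x‖ * ‖y - x‖ := real_inner_le_norm _ _
      _ ≤ L * ‖p t - x‖ * ‖y - x‖ := by gcongr; exact hlip _ _
      _ = t * (L * ‖y - x‖ ^ 2) := by
        simp only [p, add_sub_cancel_left, norm_smul, Real.norm_of_nonneg ht]; ring
  have hanti : AntitoneOn g (Set.Icc 0 1) :=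
    antitoneOn_of_hasDerivWithinAt_nonpos (convex_Icc 0 1)
      (HasDerivAt.continuousOn fun t _ => hg t) (fun t _ => (hg t).hasDerivWithinAt)
      fun t ht => by
        rw [interior_Icc] at ht
        exact sub_nonpos.mpr (hslope t ht.1.le)
  have h01 := hanti (Set.left_mem_Icc.mpr zero_le_one) (Set.right_mem_Icc.mpr zero_le_one)
    zero_le_one
  simp only [g, p, zero_smul, one_smul, add_zero, add_sub_cancel, zero_mul, one_mul, sub_zero,
    ne_eq, OfNat.ofNat_ne_zero, not_false_eq_true, zero_pow, one_pow] at h01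
  linarith

theorem lyapunov_step_le (hφ : Differentiable ℝ φ)
    (hlip : ∀ a b, ‖gradient φ a - gradient φ b‖ ≤ L * ‖a - b‖) (x x₀ v : E) (η c : ℝ) :
    φ (x - η • v) + c * ‖x - η • v - x₀‖ ^ 2 ≤
      φ x + c * ‖x - x₀‖ ^ 2 - η * ⟪gradient φ x, v⟫ - 2 * c * η * ⟪x - x₀, v⟫
        + (L / 2 * η ^ 2 + c * η ^ 2) * ‖v‖ ^ 2 := by
  have hdesc := le_add_inner_gradient_add_of_lipschitz_gradient hφ hlip x (x - η • v)
  rw [sub_sub_cancel_left, inner_neg_right, real_inner_smul_right, norm_neg, norm_smul, mul_pow,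
    Real.norm_eq_abs, sq_abs] at hdesc
  have hdist : ‖x - η • v - x₀‖ ^ 2 = ‖x - x₀‖ ^ 2 - 2 * η * ⟪x - x₀, v⟫ + η ^ 2 * ‖v‖ ^ 2 := by
    rw [sub_right_comm, norm_sub_sq_real, real_inner_smul_right, norm_smul, mul_pow,
      Real.norm_eq_abs, sq_abs]
    ring
  rw [hdist]
  linear_combination hdesc

theorem average_lyapunov_step_le (hφ : Differentiable ℝ φ)
    (hlip : ∀ a b, ‖gradient φ a - gradient φ b‖ ≤ L * ‖a - b‖) {n : ℕ} (hn : n ≠ 0)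
    (x x₀ : E) (η c : ℝ) (v : Fin n → E) (hv : (1 / (n : ℝ)) • ∑ i, v i = gradient φ x) :
    (1 / (n : ℝ)) * ∑ i, (φ (x - η • v i) + c * ‖x - η • v i - x₀‖ ^ 2) ≤
      φ x + c * ‖x - x₀‖ ^ 2 - η * ‖gradient φ x‖ ^ 2 - 2 * c * η * ⟪x - x₀, gradient φ x⟫
        + (L / 2 * η ^ 2 + c * η ^ 2) * ((1 / (n : ℝ)) * ∑ i, ‖v i‖ ^ 2) := by
  set G := gradient φ x
  calc (1 / (n : ℝ)) * ∑ i, (φ (x - η • v i) + c * ‖x - η • v i - x₀‖ ^ 2)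
      ≤ (1 / (n : ℝ)) * ∑ i, (φ x + c * ‖x - x₀‖ ^ 2 - η * ⟪G, v i⟫
          - 2 * c * η * ⟪x - x₀, v i⟫ + (L / 2 * η ^ 2 + c * η ^ 2) * ‖v i‖ ^ 2) :=
        mul_le_mul_of_nonneg_left
          (Finset.sum_le_sum fun i _ => lyapunov_step_le hφ hlip x x₀ (v i) η c) (by positivity)
    _ = φ x + c * ‖x - x₀‖ ^ 2 - η * ⟪G, (1 / (n : ℝ)) • ∑ i, v i⟫
          - 2 * c * η * ⟪x - x₀, (1 / (n : ℝ)) • ∑ i, v i⟫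
          + (L / 2 * η ^ 2 + c * η ^ 2) * ((1 / (n : ℝ)) * ∑ i, ‖v i‖ ^ 2) := by
        simp only [Finset.sum_add_distrib, Finset.sum_sub_distrib, ← Finset.mul_sum, inner_sum,
          real_inner_smul_right, Finset.sum_const, Finset.card_univ, Fintype.card_fin,
          nsmul_eq_mul]
        field_simp
    _ = _ := by rw [hv, real_inner_self_eq_norm_sq]

theorem hasGradientAt_const_mul_sum {ι : Type*} [Fintype ι] {f : ι → E → ℝ} {y : E} (a : ℝ)
    (hf : ∀ i, DifferentiableAt ℝ (f i) y) :
    HasGradientAt (fun z => a * ∑ i, f i z) (a • ∑ i, gradient (f i) y) y := by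
  rw [hasGradientAt_iff_hasFDerivAt]
  simp only [map_smulₛₗ, map_sum, starRingEnd_apply, star_trivial]
  exact (HasFDerivAt.fun_sum fun i _ => (hf i).hasGradientAt.hasFDerivAt).const_mul a

end Smooth

section Average

variable {E : Type*} [NormedAddCommGroup E] {n : ℕ}

theorem norm_add_sq_le_two_mul (a b : E) : ‖a + b‖ ^ 2 ≤ 2 * (‖a‖ ^ 2 + ‖b‖ ^ 2) :=
  (pow_le_pow_left₀ (norm_nonneg _) (norm_add_le a b) 2).trans add_sq_le

theorem average_le {a : Fin n → ℝ} {r : ℝ} (hn : n ≠ 0) (ha : ∀ i, a i ≤ r) :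
    (1 / (n : ℝ)) * ∑ i, a i ≤ r := by
  have hn' : (0 : ℝ) < n := by positivity
  calc (1 / (n : ℝ)) * ∑ i, a i ≤ (1 / (n : ℝ)) * ∑ _i : Fin n, r := by gcongr with i; exact ha i
    _ = r := by simp [hn'.ne']

theorem norm_average_le {V : Type*} [SeminormedAddCommGroup V] [NormedSpace ℝ V]
    {u : Fin n → V} {r : ℝ} (hn : n ≠ 0) (hu : ∀ i, ‖u i‖ ≤ r) :
    ‖(1 / (n : ℝ)) • ∑ i, u i‖ ≤ r := by
  rw [norm_smul, Real.norm_of_nonneg (by positivity)]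
  exact (mul_le_mul_of_nonneg_left (norm_sum_le _ _) (by positivity)).trans (average_le hn hu)

variable [InnerProductSpace ℝ E]

theorem neg_two_mul_inner_le {β : ℝ} (hβ : 0 < β) (a b : E) :
    -(2 * ⟪a, b⟫) ≤ β * ‖a‖ ^ 2 + ‖b‖ ^ 2 / β := by
  have h : 0 ≤ ‖β • a + b‖ ^ 2 := sq_nonneg _
  rw [norm_add_sq_real, real_inner_smul_left, norm_smul, Real.norm_of_nonneg hβ.le] at h
  rw [← sub_nonneg]
  have he : β * ‖a‖ ^ 2 + ‖b‖ ^ 2 / β - -(2 * ⟪a, b⟫)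
      = ((β * ‖a‖) ^ 2 + 2 * (β * ⟪a, b⟫) + ‖b‖ ^ 2) / β := by
    field_simp
    ring
  rw [he]
  exact div_nonneg h hβ.le

theorem sum_norm_sub_average_sq_le (u : Fin n → E) :
    ∑ i, ‖u i - (1 / (n : ℝ)) • ∑ j, u j‖ ^ 2 ≤ ∑ i, ‖u i‖ ^ 2 := by
  rcases eq_or_ne n 0 with rfl | hn
  · simp
  set m := (1 / (n : ℝ)) • ∑ j, u j
  have hsum : ∑ j, u j = (n : ℝ) • m := by
    rw [smul_smul, mul_one_div_cancel (Nat.cast_ne_zero.mpr hn), one_smul]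
  calc ∑ i, ‖u i - m‖ ^ 2 = ∑ i, ‖u i‖ ^ 2 - 2 * ⟪∑ i, u i, m⟫ + n * ‖m‖ ^ 2 := by
        simp only [norm_sub_sq_real, Finset.sum_add_distrib, Finset.sum_sub_distrib,
          ← Finset.mul_sum, ← sum_inner, Finset.sum_const, Finset.card_univ, Fintype.card_fin,
          nsmul_eq_mul]
    _ = ∑ i, ‖u i‖ ^ 2 - n * ‖m‖ ^ 2 := by
        rw [hsum, real_inner_smul_left, real_inner_self_eq_norm_sq]
        ring
    _ ≤ ∑ i, ‖u i‖ ^ 2 := by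
        have : 0 ≤ (n : ℝ) * ‖m‖ ^ 2 := by positivity
        linarith

/-- With `u i = ∇fᵢ x - ∇fᵢ x̃` and `g = ∇f x`, `recenter u g i` is the SVRG direction `vᵢ`. -/
noncomputable def recenter (u : Fin n → E) (g : E) (i : Fin n) : E :=
  u i - (1 / (n : ℝ)) • ∑ j, u j + g

theorem average_recenter (hn : n ≠ 0) (u : Fin n → E) (g : E) :
    (1 / (n : ℝ)) • ∑ i, recenter u g i = g := by
  have hn' : (n : ℝ) ≠ 0 := Nat.cast_ne_zero.mpr hn
  simp only [recenter, Finset.sum_add_distrib, Finset.sum_sub_distrib, Finset.sum_const,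
    Finset.card_univ, Fintype.card_fin, ← Nat.cast_smul_eq_nsmul ℝ, smul_smul,
    one_div_mul_cancel hn', mul_one_div_cancel hn', one_smul, sub_self, zero_add]

theorem average_norm_sq_recenter_le (hn : n ≠ 0) (u : Fin n → E) (g : E) :
    (1 / (n : ℝ)) * ∑ i, ‖recenter u g i‖ ^ 2
      ≤ 2 * ‖g‖ ^ 2 + 2 * ((1 / (n : ℝ)) * ∑ i, ‖u i‖ ^ 2) := by
  have hpoint : ∀ i, ‖recenter u g i‖ ^ 2
      ≤ 2 * ‖u i - (1 / (n : ℝ)) • ∑ j, u j‖ ^ 2 + 2 * ‖g‖ ^ 2 := fun i =>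
    (norm_add_sq_le_two_mul _ _).trans_eq (mul_add _ _ _)
  calc (1 / (n : ℝ)) * ∑ i, ‖recenter u g i‖ ^ 2
      ≤ (1 / (n : ℝ)) * ∑ i, (2 * ‖u i - (1 / (n : ℝ)) • ∑ j, u j‖ ^ 2 + 2 * ‖g‖ ^ 2) :=
        mul_le_mul_of_nonneg_left (Finset.sum_le_sum fun i _ => hpoint i) (by positivity)
    _ = 2 * ‖g‖ ^ 2 + 2 * ((1 / (n : ℝ)) * ∑ i, ‖u i - (1 / (n : ℝ)) • ∑ j, u j‖ ^ 2) := by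
        simp only [Finset.sum_add_distrib, ← Finset.mul_sum, Finset.sum_const, Finset.card_univ,
          Fintype.card_fin, nsmul_eq_mul]
        field_simp
        ring
    _ ≤ 2 * ‖g‖ ^ 2 + 2 * ((1 / (n : ℝ)) * ∑ i, ‖u i‖ ^ 2) := by
        gcongr _ + _ * (_ * ?_)
        exact sum_norm_sub_average_sq_le u

end Average

/-- One-step Lyapunov inequality (Eq. (12) combined with Lemma 3) in the proof of
Lemma 1: for the Lyapunov function `A(z) = f(z) + c‖z − x̃‖²`, one SVRG inner step
decreases `A` in expectation by at least `(η − cη/β − η²L − 2cη²)‖∇f(x)‖²`. -/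
theorem stmt11 {d n : ℕ} (hn : 1 ≤ n) (L : ℝ) (hL : 0 ≤ L)
    (f : Fin n → EuclideanSpace ℝ (Fin d) → ℝ)
    (hdiff : ∀ i, Differentiable ℝ (f i))
    (hlip : ∀ i, ∀ a b, ‖gradient (f i) a - gradient (f i) b‖ ≤ L * ‖a - b‖)
    (F : EuclideanSpace ℝ (Fin d) → ℝ)
    (hF : F = fun y => (1 / (n : ℝ)) * ∑ i, f i y)
    (x xtilde : EuclideanSpace ℝ (Fin d)) (η β c : ℝ)
    (hη : 0 < η) (hβ : 0 < β) (hc : 0 ≤ c)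
    (v : Fin n → EuclideanSpace ℝ (Fin d))
    (hv : ∀ i, v i = gradient (f i) x - gradient (f i) xtilde + gradient F xtilde)
    (c' : ℝ) (hc' : c' = c * (1 + η * β + 2 * η ^ 2 * L ^ 2) + η ^ 2 * L ^ 3) :
    (1 / (n : ℝ)) * ∑ i, (F (x - η • v i) + c * ‖(x - η • v i) - xtilde‖ ^ 2)
      ≤ F x + c' * ‖x - xtilde‖ ^ 2
        - (η - c * η / β - η ^ 2 * L - 2 * c * η ^ 2) * ‖gradient F x‖ ^ 2 := by
  have hn0 : n ≠ 0 := by omega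
  have hFgrad : ∀ y, HasGradientAt F ((1 / (n : ℝ)) • ∑ i, gradient (f i) y) y := fun y =>
    hF ▸ hasGradientAt_const_mul_sum _ fun i => hdiff i y
  have hFlip : ∀ a b, ‖gradient F a - gradient F b‖ ≤ L * ‖a - b‖ := fun a b => by
    rw [(hFgrad a).gradient, (hFgrad b).gradient, ← smul_sub, ← Finset.sum_sub_distrib]
    exact norm_average_le hn0 fun i => hlip i a b
  set G := gradient F x with hG
  set w := x - xtilde
  set u := fun i => gradient (f i) x - gradient (f i) xtilde
  have hvu : v = recenter u G := funext fun i => by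
    rw [hv, recenter, hG, (hFgrad x).gradient, (hFgrad xtilde).gradient]
    simp only [u, Finset.sum_sub_distrib, smul_sub]
    abel
  have hsecond : (1 / (n : ℝ)) * ∑ i, ‖v i‖ ^ 2 ≤ 2 * ‖G‖ ^ 2 + 2 * (L ^ 2 * ‖w‖ ^ 2) := by
    refine hvu ▸ (average_norm_sq_recenter_le hn0 u G).trans ?_
    gcongr _ + _ * ?_
    refine average_le hn0 fun i => ?_
    rw [← mul_pow]
    exact pow_le_pow_left₀ (norm_nonneg _) (hlip i x xtilde) 2
  calc _ ≤ F x + c * ‖w‖ ^ 2 - η * ‖G‖ ^ 2 - 2 * c * η * ⟪w, G⟫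
          + (L / 2 * η ^ 2 + c * η ^ 2) * ((1 / (n : ℝ)) * ∑ i, ‖v i‖ ^ 2) :=
        average_lyapunov_step_le (fun y => (hFgrad y).differentiableAt) hFlip hn0 x xtilde η c v
          (hvu ▸ average_recenter hn0 u G)
    _ ≤ F x + c * ‖w‖ ^ 2 - η * ‖G‖ ^ 2 + c * η * (β * ‖w‖ ^ 2 + ‖G‖ ^ 2 / β)
          + (L / 2 * η ^ 2 + c * η ^ 2) * (2 * ‖G‖ ^ 2 + 2 * (L ^ 2 * ‖w‖ ^ 2)) := by
        have hyoung := mul_le_mul_of_nonneg_left (neg_two_mul_inner_le hβ w G)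
          (mul_nonneg hc hη.le)
        have hK := mul_le_mul_of_nonneg_left hsecond
          (by positivity : 0 ≤ L / 2 * η ^ 2 + c * η ^ 2)
        linarith
    _ = _ := by
        rw [hc']
        field_simp
        ring
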